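/- arXiv:1705.10462 — 2 statements merged into one kernel-verified Lean document; each statement's English description precedes it below -/
import Mathlib

section
/- Let N ≥ 2 and let ρ be an N×N density matrix. Then equality P(ρ)² + C(ρ)² + S_L(ρ) = 1 holds if and only if both of the following hold: (i) all diagonal elements of ρ, except one maximal element p₁, are equal (each equal to (1 − p₁)/(N − 1)), and (ii) all off-diagonal elements of ρ have the same modulus. -/
open Matrix BigOperators ComplexOrder

/-- The largest diagonal entry (as a real number) of a complex matrix. -/
noncomputable def maxDiag (N : ℕ) (ρ : Matrix (Fin N) (Fin N) ℂ) : ℝ :=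
  ⨆ k, (ρ k k).re

/-- The which-path predictability P(ρ) = (N·p₁ − 1)/(N − 1). -/
noncomputable def pred (N : ℕ) (ρ : Matrix (Fin N) (Fin N) ℂ) : ℝ :=
  ((N : ℝ) * maxDiag N ρ - 1) / ((N : ℝ) - 1)

/-- The l₁ quantum coherence C(ρ) = (1/(N−1)) ∑_{i ≠ k} |ρ_ik|. -/
noncomputable def coh (N : ℕ) (ρ : Matrix (Fin N) (Fin N) ℂ) : ℝ :=
  (1 / ((N : ℝ) - 1)) * ∑ i, ∑ k, if i ≠ k then ‖ρ i k‖ else 0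

/-- The normalized linear entropy S_L(ρ) = N(1 − tr(ρ²))/(N − 1). -/
noncomputable def linEnt (N : ℕ) (ρ : Matrix (Fin N) (Fin N) ℂ) : ℝ :=
  (N : ℝ) * (1 - ((ρ * ρ).trace).re) / ((N : ℝ) - 1)

/-! Hermiticity gives `tr ρ² = ∑ₖ pₖ² + ∑_{i ≠ j} |ρᵢⱼ|²` with `pₖ = ρₖₖ`. For a finite family `f` of
`n` reals write `G f = n ∑ f² - (∑ f)² = ½ ∑ₓ ∑ᵧ (f x - f y)²` (Lagrange's identity), so `G f ≥ 0`
with equality iff `f` is constant. A direct computation with `∑ₖ pₖ = 1` gives, for `k₀` a maximal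
diagonal index,
`(N - 1)² (1 - P² - C² - S_L) = N · G (pₖ)_{k ≠ k₀} + G (|ρᵢⱼ|)_{i ≠ j}`,
so equality holds iff both families are constant; the first one then has sum `1 - p₁` over
`N - 1` indices. -/

open Finset

section CauchySchwarzGap

variable {ι R : Type*}

def cauchySchwarzGap [CommRing R] (s : Finset ι) (f : ι → R) : R :=
  #s * ∑ x ∈ s, f x ^ 2 - (∑ x ∈ s, f x) ^ 2

theorem sum_sum_sub_sq_eq_two_mul_cauchySchwarzGap [CommRing R] (s : Finset ι) (f : ι → R) :
    ∑ x ∈ s, ∑ y ∈ s, (f x - f y) ^ 2 = 2 * cauchySchwarzGap s f := by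
  simp only [cauchySchwarzGap, sub_sq, sum_add_distrib, sum_sub_distrib, sum_const, nsmul_eq_mul,
    ← mul_sum, ← sum_mul, mul_assoc]
  ring

variable [Field R] [LinearOrder R] [IsStrictOrderedRing R]

theorem cauchySchwarzGap_nonneg (s : Finset ι) (f : ι → R) : 0 ≤ cauchySchwarzGap s f :=
  sub_nonneg.2 sq_sum_le_card_mul_sum_sq

theorem cauchySchwarzGap_eq_zero_iff {s : Finset ι} {f : ι → R} :
    cauchySchwarzGap s f = 0 ↔ ∀ x ∈ s, ∀ y ∈ s, f x = f y := by
  rw [← mul_right_inj' (two_ne_zero' R), mul_zero, ← sum_sum_sub_sq_eq_two_mul_cauchySchwarzGap,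
    sum_eq_zero_iff_of_nonneg fun x _ ↦ sum_nonneg fun y _ ↦ sq_nonneg _]
  simp only [sum_eq_zero_iff_of_nonneg fun y _ ↦ sq_nonneg (f _ - f y), sq_eq_zero_iff, sub_eq_zero]

end CauchySchwarzGap

theorem Finset.forall_mem_eq_iff_eq_sum_div_card {ι K : Type*} [Semifield K] [CharZero K]
    {s : Finset ι} {f : ι → K} :
    (∀ x ∈ s, ∀ y ∈ s, f x = f y) ↔ ∀ x ∈ s, f x = (∑ y ∈ s, f y) / #s := by
  refine ⟨fun h x hx ↦ ?_, fun h x hx y hy ↦ by rw [h x hx, h y hy]⟩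
  rw [sum_congr rfl fun y hy ↦ h y hy x hx, sum_const, nsmul_eq_mul, mul_div_cancel_left₀]
  exact Nat.cast_ne_zero.2 (card_ne_zero_of_mem hx)

section Matrix

variable {n : Type*} [Fintype n] [DecidableEq n]

theorem Finset.sum_sum_ite_ne_eq_sum_offDiag {M : Type*} [AddCommMonoid M] (f : n → n → M) :
    ∑ i, ∑ j, (if i ≠ j then f i j else 0) = ∑ q ∈ univ.offDiag, f q.1 q.2 := by
  rw [show (univ : Finset n).offDiag = univ.filter (fun q : n × n ↦ q.1 ≠ q.2) by ext; simp,
    sum_filter, Fintype.sum_prod_type]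

theorem Finset.sum_sum_eq_sum_add_sum_offDiag {M : Type*} [AddCommMonoid M] (f : n → n → M) :
    ∑ i, ∑ j, f i j = ∑ i, f i i + ∑ q ∈ univ.offDiag, f q.1 q.2 := by
  rw [← sum_sum_ite_ne_eq_sum_offDiag, ← sum_add_distrib]
  refine sum_congr rfl fun i _ ↦ ?_
  rw [← sum_filter, filter_ne, add_sum_erase _ _ (mem_univ i)]

theorem Matrix.IsHermitian.re_trace_mul_self {A : Matrix n n ℂ} (hA : A.IsHermitian) :
    (A * A).trace.re = ∑ i, (A i i).re ^ 2 + ∑ q ∈ univ.offDiag, ‖A q.1 q.2‖ ^ 2 := by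
  have hnorm : ∀ i j, (A i j * A j i).re = ‖A i j‖ ^ 2 := fun i j ↦ by
    rw [← hA.apply j i, Complex.star_def, Complex.mul_conj, Complex.ofReal_re,
      Complex.normSq_eq_norm_sq]
  have hdiag : ∀ i, ‖A i i‖ ^ 2 = (A i i).re ^ 2 := fun i ↦ by
    conv_lhs => rw [← hA.coe_re_apply_self i]
    rw [RCLike.norm_ofReal, sq_abs, RCLike.re_to_complex]
  simp only [trace, diag_apply, mul_apply, Complex.re_sum, hnorm]
  rw [sum_sum_eq_sum_add_sum_offDiag]
  simp only [hdiag]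

end Matrix

theorem Matrix.sum_re_diag_eq_one {n : Type*} [Fintype n] {A : Matrix n n ℂ} (htr : A.trace = 1) :
    ∑ i, (A i i).re = 1 := by
  simpa [trace, Complex.re_sum] using congrArg Complex.re htr

theorem exists_re_diag_eq_maxDiag {N : ℕ} [NeZero N] (ρ : Matrix (Fin N) (Fin N) ℂ) :
    ∃ k, (ρ k k).re = maxDiag N ρ :=
  exists_eq_ciSup_of_finite

section Complementarity

variable {N : ℕ} {ρ : Matrix (Fin N) (Fin N) ℂ}

theorem Fin.cast_card_univ_erase (k : Fin N) : (#(univ.erase k) : ℝ) = N - 1 := by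
  rw [card_erase_of_mem (mem_univ k), card_univ, Fintype.card_fin,
    Nat.cast_pred (Fin.pos k)]

theorem pred_sq_add_coh_sq_add_linEnt_eq (hN : 2 ≤ N) (hρ : ρ.IsHermitian) (htr : ρ.trace = 1)
    {k₀ : Fin N} (hk₀ : (ρ k₀ k₀).re = maxDiag N ρ) :
    pred N ρ ^ 2 + coh N ρ ^ 2 + linEnt N ρ =
      1 - (N * cauchySchwarzGap (univ.erase k₀) (fun k ↦ (ρ k k).re) +
        cauchySchwarzGap univ.offDiag (fun q : Fin N × Fin N ↦ ‖ρ q.1 q.2‖)) / ((N : ℝ) - 1) ^ 2 := by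
  have hcard_offDiag : (#(univ : Finset (Fin N)).offDiag : ℝ) = N * (N - 1) := by
    rw [offDiag_card, card_univ, Fintype.card_fin, Nat.cast_sub (Nat.le_mul_self N)]
    push_cast
    ring
  have hN1 : (N : ℝ) - 1 ≠ 0 := (sub_pos.2 (Nat.one_lt_cast.2 hN)).ne'
  unfold pred coh linEnt cauchySchwarzGap
  rw [sum_sum_ite_ne_eq_sum_offDiag (fun i k ↦ ‖ρ i k‖), hρ.re_trace_mul_self, ← hk₀,
    Fin.cast_card_univ_erase, hcard_offDiag, sum_erase_eq_sub (mem_univ _),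
    sum_erase_eq_sub (mem_univ _), sum_re_diag_eq_one htr]
  field_simp
  ring

theorem pred_sq_add_coh_sq_add_linEnt_eq_one_iff (hN : 2 ≤ N) (hρ : ρ.IsHermitian)
    (htr : ρ.trace = 1) {k₀ : Fin N} (hk₀ : (ρ k₀ k₀).re = maxDiag N ρ) :
    pred N ρ ^ 2 + coh N ρ ^ 2 + linEnt N ρ = 1 ↔
      (∀ k, k ≠ k₀ → (ρ k k).re = (1 - maxDiag N ρ) / ((N : ℝ) - 1)) ∧
      ∀ i k l m : Fin N, i ≠ k → l ≠ m → ‖ρ i k‖ = ‖ρ l m‖ := by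
  have hN1 : (N : ℝ) - 1 ≠ 0 := (sub_pos.2 (Nat.one_lt_cast.2 hN)).ne'
  rw [pred_sq_add_coh_sq_add_linEnt_eq hN hρ htr hk₀, sub_eq_self, div_eq_zero_iff,
    or_iff_left (pow_ne_zero 2 hN1),
    add_eq_zero_iff_of_nonneg (mul_nonneg N.cast_nonneg (cauchySchwarzGap_nonneg _ _))
      (cauchySchwarzGap_nonneg _ _),
    mul_eq_zero, or_iff_right (Nat.cast_ne_zero.2 (by omega)), cauchySchwarzGap_eq_zero_iff,
    cauchySchwarzGap_eq_zero_iff, forall_mem_eq_iff_eq_sum_div_card, sum_erase_eq_sub (mem_univ _),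
    sum_re_diag_eq_one htr, Fin.cast_card_univ_erase, hk₀]
  simp only [mem_erase, mem_univ, and_true, mem_offDiag, true_and, Prod.forall]
  exact and_congr_right' ⟨fun h i k l m hik hlm ↦ h i k hik l m hlm,
    fun h i k hik l m hlm ↦ h i k l m hik hlm⟩

end Complementarity

/-- Equality case of the TCR: P(ρ)² + C(ρ)² + S_L(ρ) = 1 iff (i) all diagonal
entries of ρ except one maximal entry p₁ equal (1−p₁)/(N−1), and (ii) all
off-diagonal entries of ρ have the same modulus. -/
theorem stmt7 {N : ℕ} (hN : 2 ≤ N) (ρ : Matrix (Fin N) (Fin N) ℂ)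
    (hρ : ρ.PosSemidef) (htr : ρ.trace = 1) :
    (pred N ρ) ^ 2 + (coh N ρ) ^ 2 + linEnt N ρ = 1 ↔
    ((∃ k₀ : Fin N, (ρ k₀ k₀).re = maxDiag N ρ ∧
        ∀ k : Fin N, k ≠ k₀ → (ρ k k).re = (1 - maxDiag N ρ) / ((N : ℝ) - 1)) ∧
      (∀ i k l m : Fin N, i ≠ k → l ≠ m →
        ‖ρ i k‖ = ‖ρ l m‖)) := by
  constructor
  · intro h
    have : NeZero N := ⟨by omega⟩
    obtain ⟨k₀, hk₀⟩ := exists_re_diag_eq_maxDiag ρ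
    obtain ⟨hdiag, hoff⟩ := (pred_sq_add_coh_sq_add_linEnt_eq_one_iff hN hρ.1 htr hk₀).1 h
    exact ⟨⟨k₀, hk₀, hdiag⟩, hoff⟩
  · rintro ⟨⟨k₀, hk₀, hdiag⟩, hoff⟩
    exact (pred_sq_add_coh_sq_add_linEnt_eq_one_iff hN hρ.1 htr hk₀).2 ⟨hdiag, hoff⟩
end

section
/- Let N ≥ 2, let M ≥ 1, let ρ_1, …, ρ_M be N×N density matrices, and let w_1, …, w_M be nonnegative reals with ∑_i w_i = 1. Let ρ̄ = ∑_i w_i · ρ_i. Then (∑_i w_i · P(ρ_i))² + C(ρ̄)² ≤ 1, i.e. the average which-path predictability of the subensembles and the coherence of the averaged state satisfy the generalized wave-particle duality relation. -/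
/-!
For a single state with diagonal `p`, the `2 × 2` principal minors give `|ρ_ik| ≤ √(p_i p_k)`,
so `(N - 1) C(ρ) ≤ (∑ √p_i)² - 1`. Cauchy–Schwarz on the diagonal entries other than the largest
one `p₁` gives `∑ √p_i ≤ √p₁ + √((N - 1)(1 - p₁))`, and an elementary inequality in `p₁` then
yields `P(ρ)² + C(ρ)² ≤ 1`. For a mixture, `C` is convex, being a seminorm up to a positive
factor, and `x ↦ x²` is convex, so `P̄² + C(ρ̄)²` is at most the average of the single-state
bounds.
-/

open Matrix BigOperators ComplexOrder

open Finset

section OffDiag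
variable {n : Type*} [Fintype n] [DecidableEq n]

noncomputable def offDiagL1Norm (A : Matrix n n ℂ) : ℝ :=
  ∑ i, ∑ k, if i ≠ k then ‖A i k‖ else 0

lemma offDiagL1Norm_nonneg (A : Matrix n n ℂ) : 0 ≤ offDiagL1Norm A :=
  sum_nonneg fun _ _ => sum_nonneg fun _ _ => by split_ifs <;> simp

lemma offDiagL1Norm_add_le (A B : Matrix n n ℂ) :
    offDiagL1Norm (A + B) ≤ offDiagL1Norm A + offDiagL1Norm B := by
  simp only [offDiagL1Norm, ← sum_add_distrib]
  gcongr with i _ k _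
  split_ifs
  · exact norm_add_le _ _
  · simp

lemma offDiagL1Norm_smul (c : ℂ) (A : Matrix n n ℂ) :
    offDiagL1Norm (c • A) = ‖c‖ * offDiagL1Norm A := by
  simp [offDiagL1Norm, mul_sum]

lemma offDiagL1Norm_sum_smul_le {ι : Type*} (s : Finset ι) (w : ι → ℝ) (hw : ∀ i ∈ s, 0 ≤ w i)
    (A : ι → Matrix n n ℂ) :
    offDiagL1Norm (∑ i ∈ s, (w i : ℂ) • A i) ≤ ∑ i ∈ s, w i * offDiagL1Norm (A i) := by
  refine (le_sum_of_subadditive _ (by simp [offDiagL1Norm]) offDiagL1Norm_add_le s _).trans_eq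
    (sum_congr rfl fun i hi => ?_)
  rw [offDiagL1Norm_smul, Complex.norm_real, Real.norm_of_nonneg (hw i hi)]

end OffDiag

namespace Matrix.PosSemidef
variable {n : Type*} {A : Matrix n n ℂ}

lemma im_apply_self (hA : A.PosSemidef) (i : n) : (A i i).im = 0 :=
  ((Complex.le_def.mp (hA.diag_nonneg (i := i))).2).symm

lemma re_apply_self_nonneg (hA : A.PosSemidef) (i : n) : 0 ≤ (A i i).re :=
  (Complex.le_def.mp (hA.diag_nonneg (i := i))).1

lemma norm_apply_sq_le (hA : A.PosSemidef) (i j : n) :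
    ‖A i j‖ ^ 2 ≤ (A i i).re * (A j j).re := by
  have h := (Complex.le_def.mp (hA.submatrix ![i, j]).det_nonneg).1
  simp only [det_fin_two, submatrix_apply, Matrix.cons_val_zero, Matrix.cons_val_one,
    ← hA.1.apply j i, Complex.sub_re, Complex.mul_re, Complex.zero_re, hA.im_apply_self,
    Complex.star_def, Complex.conj_re, Complex.conj_im] at h
  rw [Complex.sq_norm, Complex.normSq_apply]
  linarith

lemma norm_apply_le (hA : A.PosSemidef) (i j : n) :
    ‖A i j‖ ≤ √(A i i).re * √(A j j).re := by
  rw [← Real.sqrt_mul (hA.re_apply_self_nonneg i)]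
  exact Real.le_sqrt_of_sq_le (hA.norm_apply_sq_le i j)

lemma offDiagL1Norm_le [Fintype n] [DecidableEq n] (hA : A.PosSemidef) :
    offDiagL1Norm A ≤ (∑ i, √(A i i).re) ^ 2 - ∑ i, (A i i).re := by
  calc offDiagL1Norm A
      ≤ ∑ i, ∑ k, if i ≠ k then √(A i i).re * √(A k k).re else 0 := by
        unfold offDiagL1Norm
        gcongr with i _ k _
        split_ifs
        · exact hA.norm_apply_le i k
        · rfl
    _ = (∑ i, √(A i i).re) ^ 2 - ∑ i, (A i i).re := by
        simp only [ite_not, sum_ite, filter_ne, sum_erase_eq_sub (mem_univ _), sum_const_zero,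
          zero_add, ← mul_sum, sum_sub_distrib, sq, sum_mul,
          Real.mul_self_sqrt (hA.re_apply_self_nonneg _)]

end Matrix.PosSemidef

lemma sum_sqrt_le_sqrt_add_sqrt {ι : Type*} [Fintype ι] [DecidableEq ι] {p : ι → ℝ}
    (hp : ∀ i, 0 ≤ p i) (k : ι) :
    ∑ i, √(p i) ≤ √(p k) + √((Fintype.card ι - 1) * (∑ i, p i - p k)) := by
  have hcard : (1 : ℝ) ≤ Fintype.card ι := by exact_mod_cast Fintype.card_pos_iff.mpr ⟨k⟩
  have h := Real.sum_sqrt_mul_sqrt_le (univ.erase k) hp (fun _ => zero_le_one)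
  simp only [Real.sqrt_one, mul_one, sum_const, card_erase_of_mem (mem_univ k), card_univ,
    nsmul_eq_mul, Nat.cast_pred (Fintype.card_pos_iff.mpr ⟨k⟩)] at h
  rwa [← add_sum_erase _ _ (mem_univ k), ← add_sum_erase _ p (mem_univ k), add_sub_cancel_left,
    mul_comm, Real.sqrt_mul' _ (by linarith), add_le_add_iff_left]

lemma sq_add_sq_le_of_le_sq_sqrt_add_sqrt {n p D : ℝ} (hn : 2 ≤ n) (hp0 : 0 ≤ p) (hp1 : p ≤ 1)
    (hD0 : 0 ≤ D) (hD : D ≤ (√p + √((n - 1) * (1 - p))) ^ 2 - 1) :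
    (n * p - 1) ^ 2 + D ^ 2 ≤ (n - 1) ^ 2 := by
  set t := √p * √((n - 1) * (1 - p))
  have ht0 : 0 ≤ t := by positivity
  have ht2 : t ^ 2 = (n - 1) * p * (1 - p) := by
    rw [mul_pow, Real.sq_sqrt hp0, Real.sq_sqrt (by nlinarith)]; ring
  have hD' : D ≤ (n - 2) * (1 - p) + 2 * t := by
    rw [add_sq, Real.sq_sqrt hp0, Real.sq_sqrt (by nlinarith)] at hD; linarith
  -- `(1 + (n - 2) p)² - 4 t² = (n p - 1)²`
  have h2t : 2 * t ≤ 1 + (n - 2) * p :=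
    (pow_le_pow_iff_left₀ (by positivity) (by nlinarith) two_ne_zero).mp
      (by nlinarith [sq_nonneg (n * p - 1)])
  -- with `D` at its bound, `(n p - 1)² + D² - (n - 1)² = 2 (n - 2) (1 - p) (2 t - 1 - (n - 2) p)`
  nlinarith [pow_le_pow_left₀ hD0 hD' 2,
    mul_nonneg (mul_nonneg (by linarith : (0 : ℝ) ≤ n - 2) (by linarith : 0 ≤ 1 - p))
      (by linarith : 0 ≤ 1 + (n - 2) * p - 2 * t)]

lemma coh_eq_offDiagL1Norm_div (N : ℕ) (ρ : Matrix (Fin N) (Fin N) ℂ) :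
    coh N ρ = offDiagL1Norm ρ / (N - 1) := by
  rw [coh, one_div_mul_eq_div]; rfl

lemma pred_sq_add_coh_sq_le_one {N : ℕ} (hN : 2 ≤ N) {ρ : Matrix (Fin N) (Fin N) ℂ}
    (hρ : ρ.PosSemidef) (htr : ρ.trace = 1) :
    pred N ρ ^ 2 + coh N ρ ^ 2 ≤ 1 := by
  have : Nonempty (Fin N) := ⟨⟨0, by omega⟩⟩
  have hn : (2 : ℝ) ≤ N := by exact_mod_cast hN
  set p : Fin N → ℝ := fun i => (ρ i i).re
  have hp0 : ∀ i, 0 ≤ p i := hρ.re_apply_self_nonneg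
  have hp1 : ∑ i, p i = 1 := by simpa [trace, Complex.re_sum] using congrArg Complex.re htr
  obtain ⟨k, hk⟩ := exists_eq_ciSup_of_finite (f := p)
  have hpk : p k ≤ 1 := hp1 ▸ single_le_sum (fun i _ => hp0 i) (mem_univ k)
  have hD : offDiagL1Norm ρ ≤ (√(p k) + √((N - 1) * (1 - p k))) ^ 2 - 1 :=
    calc offDiagL1Norm ρ ≤ (∑ i, √(p i)) ^ 2 - 1 := hp1 ▸ hρ.offDiagL1Norm_le
      _ ≤ _ := by
        gcongr
        simpa [hp1] using sum_sqrt_le_sqrt_add_sqrt hp0 k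
  have key := sq_add_sq_le_of_le_sq_sqrt_add_sqrt hn (hp0 k) hpk (offDiagL1Norm_nonneg ρ) hD
  rwa [pred, maxDiag, ← hk, coh_eq_offDiagL1Norm_div, div_pow, div_pow, ← add_div,
    div_le_one (by nlinarith)]

lemma sq_sum_mul_le_sum_mul_sq {ι : Type*} (s : Finset ι) {w : ι → ℝ} (hw : ∀ i ∈ s, 0 ≤ w i)
    (hw1 : ∑ i ∈ s, w i = 1) (x : ι → ℝ) :
    (∑ i ∈ s, w i * x i) ^ 2 ≤ ∑ i ∈ s, w i * x i ^ 2 := by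
  simpa using (even_two.convexOn_pow (𝕜 := ℝ)).map_sum_le hw hw1 (fun _ _ => Set.mem_univ (x _))

theorem stmt16_general {N M : ℕ} (hN : 2 ≤ N)
    (ρ : Fin M → Matrix (Fin N) (Fin N) ℂ)
    (hρ : ∀ i, (ρ i).PosSemidef) (htr : ∀ i, (ρ i).trace = 1)
    (w : Fin M → ℝ) (hw : ∀ i, 0 ≤ w i) (hsum : ∑ i, w i = 1) :
    (∑ i, w i * pred N (ρ i)) ^ 2 +
      (coh N (∑ i, ((w i : ℂ) • ρ i))) ^ 2 ≤ 1 := by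
  have hN1 : (0 : ℝ) ≤ N - 1 := sub_nonneg.mpr (by exact_mod_cast (by omega : 1 ≤ N))
  have hw' : ∀ i ∈ univ, 0 ≤ w i := fun i _ => hw i
  have hcoh0 : 0 ≤ coh N (∑ i, ((w i : ℂ) • ρ i)) :=
    coh_eq_offDiagL1Norm_div N _ ▸ div_nonneg (offDiagL1Norm_nonneg _) hN1
  have hcoh : coh N (∑ i, ((w i : ℂ) • ρ i)) ≤ ∑ i, w i * coh N (ρ i) := by
    simp only [coh_eq_offDiagL1Norm_div, mul_div_assoc', ← sum_div]
    gcongr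
    exact offDiagL1Norm_sum_smul_le univ w hw' ρ
  calc (∑ i, w i * pred N (ρ i)) ^ 2 + coh N (∑ i, ((w i : ℂ) • ρ i)) ^ 2
      ≤ (∑ i, w i * pred N (ρ i)) ^ 2 + (∑ i, w i * coh N (ρ i)) ^ 2 := by gcongr
    _ ≤ ∑ i, w i * pred N (ρ i) ^ 2 + ∑ i, w i * coh N (ρ i) ^ 2 :=
        add_le_add (sq_sum_mul_le_sum_mul_sq _ hw' hsum _) (sq_sum_mul_le_sum_mul_sq _ hw' hsum _)
    _ = ∑ i, w i * (pred N (ρ i) ^ 2 + coh N (ρ i) ^ 2) := by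
        simp only [mul_add, sum_add_distrib]
    _ ≤ ∑ i, w i * 1 := by
        gcongr with i
        · exact hw i
        · exact pred_sq_add_coh_sq_le_one hN (hρ i) (htr i)
    _ = 1 := by simp [hsum]

/-- The generalized wave-particle duality: the average predictability of the
subensembles and the coherence of the averaged state satisfy P̄² + C(ρ̄)² ≤ 1. -/
theorem stmt16 {N M : ℕ} (hN : 2 ≤ N) (hM : 1 ≤ M)
    (ρ : Fin M → Matrix (Fin N) (Fin N) ℂ)
    (hρ : ∀ i, (ρ i).PosSemidef) (htr : ∀ i, (ρ i).trace = 1)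
    (w : Fin M → ℝ) (hw : ∀ i, 0 ≤ w i) (hsum : ∑ i, w i = 1) :
    (∑ i, w i * pred N (ρ i)) ^ 2 +
      (coh N (∑ i, ((w i : ℂ) • ρ i))) ^ 2 ≤ 1 :=
  stmt16_general hN ρ hρ htr w hw hsum
end
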